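/- Let (X_{ij})_{i,j∈ℤ} be a stationary m-dependent random field that is regularly varying with index α∈[2,4). Fix β with 4/(3α) < β < 2(8−α)/(α(10−α)) and η with 5/6 < η < 1, and set ε_n := n^β/b_n. Let Ω_n^{(3)} be the event that there exists 1≤l≤k_n such that the set of positions (i,j) in block B̂_{1,l} with |Â_{ij}| > ε_n is nonempty and is not contained in any square of indices of side length 2m+1 (i.e. in a set {(i,j): i₀≤i≤i₀+2m, j₀≤j≤j₀+2m} for some i₀,j₀). Then k_n·ℙ(Ω_n^{(3)}) → 0 as n→∞. -/

import Mathlib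

open MeasureTheory ProbabilityTheory Filter Matrix

noncomputable section

/-- A real-valued random field indexed by `ℤ × ℤ` is stationary if its finite-dimensional
distributions are invariant under all shifts of `ℤ²`. -/
def IsStationaryField {Ω : Type*} [MeasurableSpace Ω] (μ : Measure Ω)
    (X : ℤ × ℤ → Ω → ℝ) : Prop :=
  ∀ a b : ℤ,
    Measure.map (fun ω => fun p : ℤ × ℤ => X (p.1 + a, p.2 + b) ω) μ =
      Measure.map (fun ω => fun p : ℤ × ℤ => X p ω) μ

/-- A random field `X` is `m`-dependent if any two subfamilies whose index sets are separated
by a (sup-)distance greater than `m` are independent. -/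
def IsMDependent {Ω : Type*} [MeasurableSpace Ω] (μ : Measure Ω)
    (X : ℤ × ℤ → Ω → ℝ) (m : ℕ) : Prop :=
  ∀ A B : Set (ℤ × ℤ),
    (∀ p ∈ A, ∀ q ∈ B, (m : ℤ) < max |p.1 - q.1| |p.2 - q.2|) →
    IndepFun (fun ω => fun p : A => X p.1 ω) (fun ω => fun q : B => X q.1 ω) μ

/-- A positive function is slowly varying if `L (c x) / L x → 1` as `x → ∞` for every `c > 0`. -/
def SlowlyVarying (L : ℝ → ℝ) : Prop :=
  (∀ x : ℝ, 0 < x → 0 < L x) ∧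
    ∀ c : ℝ, 0 < c → Tendsto (fun x => L (c * x) / L x) atTop (nhds 1)

/-- The field is regularly varying with index `α`: `ℙ(|X₀₀| > x) = x^(-α) L(x)`
for a slowly varying `L`. -/
def IsRegVarying {Ω : Type*} [MeasurableSpace Ω] (μ : Measure Ω)
    (X : ℤ × ℤ → Ω → ℝ) (α : ℝ) : Prop :=
  ∃ L : ℝ → ℝ, SlowlyVarying L ∧
    ∀ x : ℝ, 0 < x → (μ {ω | x < |X (0, 0) ω|}).toReal = x ^ (-α) * L x

/-- The symmetrized field `X̂`. -/
def symX {Ω : Type*} (X : ℤ × ℤ → Ω → ℝ) (i j : ℤ) (ω : Ω) : ℝ :=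
  if i ≤ j then X (i, j) ω else X (j, i) ω

/-- `(a_n)` is a normalizing sequence: `a_n → ∞` and `n ℙ(|X₀₀| > a_n) → 1`. -/
def IsNormSeq {Ω : Type*} [MeasurableSpace Ω] (μ : Measure Ω)
    (X : ℤ × ℤ → Ω → ℝ) (a : ℕ → ℝ) : Prop :=
  Tendsto a atTop atTop ∧
    Tendsto (fun n : ℕ => (n : ℝ) * (μ {ω | a n < |X (0, 0) ω|}).toReal) atTop (nhds 1)

/-- The Wigner matrix `Â_n = (X̂_{ij} / b)_{1 ≤ i,j ≤ n}`. -/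
def wignerMat {Ω : Type*} (X : ℤ × ℤ → Ω → ℝ) (b : ℝ) (n : ℕ) (ω : Ω) :
    Matrix (Fin n) (Fin n) ℝ :=
  Matrix.of fun i j => symX X ((i : ℕ) + 1 : ℤ) ((j : ℕ) + 1 : ℤ) ω / b

/-- The `p × n` data matrix `A = (X_{ij} / c)_{1 ≤ i ≤ p, 1 ≤ j ≤ n}`. -/
def dataMat {Ω : Type*} (X : ℤ × ℤ → Ω → ℝ) (c : ℝ) (p n : ℕ) (ω : Ω) :
    Matrix (Fin p) (Fin n) ℝ :=
  Matrix.of fun i j => X (((i : ℕ) + 1 : ℤ), ((j : ℕ) + 1 : ℤ)) ω / c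

/-- Entrywise truncation keeping the entries of absolute value `> t` : `M^{>t}`. -/
def truncGt {p q : ℕ} (M : Matrix (Fin p) (Fin q) ℝ) (t : ℝ) : Matrix (Fin p) (Fin q) ℝ :=
  Matrix.of fun i j => if t < |M i j| then M i j else 0

/-- `M^{<t} := M - M^{>t}`, i.e. the entries of absolute value `≤ t`. -/
def truncLe {p q : ℕ} (M : Matrix (Fin p) (Fin q) ℝ) (t : ℝ) : Matrix (Fin p) (Fin q) ℝ :=
  M - truncGt M t

/-- The spectral norm (largest singular value) of a rectangular real matrix, realized as the
operator norm of the induced map between Euclidean spaces. -/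
def specNorm {p q : ℕ} (M : Matrix (Fin p) (Fin q) ℝ) : ℝ :=
  ‖LinearMap.toContinuousLinearMap (Matrix.toEuclideanLin M)‖

/-- The event that the `(k,l)` block (of size `r × r`, `1`-based block indices) of the
matrix `(X̂_{ij}/b)` has max-norm `> ε`. -/
def blockExceed {Ω : Type*} (X : ℤ × ℤ → Ω → ℝ) (b : ℝ) (r k l : ℕ) (ε : ℝ) (ω : Ω) : Prop :=
  ∃ i ∈ Finset.Ioc ((k - 1) * r) (k * r), ∃ j ∈ Finset.Ioc ((l - 1) * r) (l * r),
    ε < |symX X (i : ℤ) (j : ℤ) ω / b|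

/-- `r_n = n^(1-η)` (as a natural number, via the floor). -/
def rseq (η : ℝ) (n : ℕ) : ℕ := ⌊(n : ℝ) ^ (1 - η)⌋₊

/-- `k_n = n^η` (as a natural number, via the floor). -/
def kseq (η : ℝ) (n : ℕ) : ℕ := ⌊(n : ℝ) ^ η⌋₊

/-- The set of `n` for which `n^(1-η)` and `n^η` are integers. -/
def goodSet (η : ℝ) : Set ℕ :=
  {n | ((rseq η n : ℝ) = (n : ℝ) ^ (1 - η)) ∧ ((kseq η n : ℝ) = (n : ℝ) ^ η)}

/-- `lam` is an eigenvalue of the real matrix `M`. -/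
def IsEigenvalue {n : Type*} [Fintype n] (M : Matrix n n ℝ) (lam : ℝ) : Prop :=
  ∃ v : n → ℝ, v ≠ 0 ∧ M.mulVec v = lam • v

/-- The multiset of singular values of a rectangular real matrix: the square roots of the
eigenvalues of `Mᵀ M` (`= Mᴴ M` over `ℝ`), with multiplicity. -/
def singularValues {p q : ℕ} (M : Matrix (Fin p) (Fin q) ℝ) : Multiset ℝ :=
  Finset.univ.val.map fun i =>
    Real.sqrt ((Matrix.isHermitian_conjTranspose_mul_self M).eigenvalues i)

/-- The eigenvalues of a real symmetric matrix, sorted increasingly (as a list);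
junk value for non-symmetric matrices. -/
def sortedEigs {N : ℕ} (M : Matrix (Fin N) (Fin N) ℝ) : List ℝ :=
  if h : M.IsHermitian then (Finset.univ.val.map h.eigenvalues).sort (· ≤ ·)
  else List.replicate N 0

/-- The index of row `i` of block-row `a` inside a `(k*r) × (k*r)` matrix partitioned
into `r × r` blocks. -/
def blkIdx {k r : ℕ} (a : Fin k) (i : Fin r) : Fin (k * r) :=
  ⟨a.1 * r + i.1, by
    have hi := i.2
    have ha := a.2
    have h1 : a.1 * r + i.1 < (a.1 + 1) * r := by nlinarith
    have h2 : (a.1 + 1) * r ≤ k * r := by nlinarith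
    exact lt_of_lt_of_le h1 h2⟩

/-- The `(a,b)` block (of size `r × r`) of a `(k*r) × (k*r)` matrix. -/
def blockOf {k r : ℕ} (H : Matrix (Fin (k * r)) (Fin (k * r)) ℝ) (a b : Fin k) :
    Matrix (Fin r) (Fin r) ℝ :=
  Matrix.of fun i j => H (blkIdx a i) (blkIdx b j)

/-- The `n × n` matrix with entries `X̂_{ij} 1{|X̂_{ij}| < t}` (not yet normalized). -/
def truncSymMat {Ω : Type*} (X : ℤ × ℤ → Ω → ℝ) (n : ℕ) (t : ℝ) (ω : Ω) :
    Matrix (Fin n) (Fin n) ℝ :=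
  Matrix.of fun i j =>
    if |symX X ((i : ℕ) + 1 : ℤ) ((j : ℕ) + 1 : ℤ) ω| < t
    then symX X ((i : ℕ) + 1 : ℤ) ((j : ℕ) + 1 : ℤ) ω else 0

/-!
If the exceedances `|X̂ᵢⱼ| > n^β` in a block do not fit in a `(2m+1)`-square, two of them are more
than `2m` apart. A block `B̂₁ₗ` with `l ≥ 2` lies above the diagonal, so these are entries of `X`
itself at distance `> m`, hence independent, and a union bound over pairs gives `r⁴ T²` with
`T = ℙ(|X₀₀| > n^β)`; the diagonal block `B̂₁₁` is bounded crudely by `r² T`. Hence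
`k ℙ(Ω⁽³⁾) ≤ u + u²` with `u = k r² T ≤ n^(2-η) T`, and a Potter bound `T ≤ C n^(-βγ)` for some
`γ < α` gives `u → 0`, because `αβ > 4/3 > 2 - η`.
-/

open Topology

theorem SlowlyVarying.eventually_le_two_rpow_mul {L : ℝ → ℝ} (hL : SlowlyVarying L) {δ : ℝ}
    (hδ : 0 < δ) : ∀ᶠ x in atTop, L (2 * x) ≤ 2 ^ δ * L x := by
  filter_upwards [(hL.2 2 two_pos).eventually_lt_const (Real.one_lt_rpow one_lt_two hδ),
    eventually_gt_atTop 0] with x hx hx0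
  exact ((div_lt_iff₀ (hL.1 x hx0)).1 hx).le

theorem AntitoneOn.le_mul_rpow_neg_of_doubling {T : ℝ → ℝ} {x₀ γ : ℝ} (hx₀ : 0 < x₀)
    (hγ : 0 ≤ γ) (hT₀ : 0 ≤ T x₀) (hT : AntitoneOn T (Set.Ici x₀))
    (hdbl : ∀ x ≥ x₀, T (2 * x) ≤ 2 ^ (-γ) * T x) {x : ℝ} (hx : x₀ ≤ x) :
    T x ≤ (2 * x₀) ^ γ * T x₀ * x ^ (-γ) := by
  set C := (2 * x₀) ^ γ * T x₀ with hC
  have hbase : ∀ x, x₀ ≤ x → x ≤ 2 * x₀ → T x ≤ C * x ^ (-γ) := fun x hx hx' =>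
    calc T x ≤ T x₀ := hT Set.self_mem_Ici hx hx
      _ = C * (2 * x₀) ^ (-γ) := by
        rw [hC, Real.rpow_neg (by positivity)]
        field_simp
      _ ≤ C * x ^ (-γ) := mul_le_mul_of_nonneg_left
        (Real.rpow_le_rpow_of_nonpos (hx₀.trans_le hx) hx' (neg_nonpos.2 hγ)) (by positivity)
  suffices ∀ k : ℕ, ∀ x, x₀ ≤ x → x ≤ 2 ^ k * (2 * x₀) → T x ≤ C * x ^ (-γ) by
    obtain ⟨k, hk⟩ := pow_unbounded_of_one_lt (x / (2 * x₀)) one_lt_two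
    exact this k x hx ((div_le_iff₀ (by positivity)).1 hk.le)
  intro k
  induction k with
  | zero => simpa using hbase
  | succ k ih =>
    intro x hx hxk
    rcases le_or_gt x (2 * x₀) with hx2 | hx2
    · exact hbase x hx hx2
    · have hhalf := ih (x / 2) (by linarith) (by rw [pow_succ] at hxk; linarith)
      calc T x = T (2 * (x / 2)) := by ring_nf
        _ ≤ 2 ^ (-γ) * T (x / 2) := hdbl _ (by linarith)
        _ ≤ 2 ^ (-γ) * (C * (x / 2) ^ (-γ)) := by gcongr
        _ = C * x ^ (-γ) := by
          rw [Real.div_rpow (by linarith) zero_le_two]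
          field_simp

theorem IsRegVarying.exists_eventually_tail_le {Ω : Type*} [MeasurableSpace Ω] {μ : Measure Ω}
    [IsFiniteMeasure μ] {X : ℤ × ℤ → Ω → ℝ} {α γ : ℝ} (hreg : IsRegVarying μ X α)
    (hγ : 0 ≤ γ) (hγα : γ < α) :
    ∃ C, ∀ᶠ x in atTop, μ.real {ω | x < |X (0, 0) ω|} ≤ C * x ^ (-γ) := by
  obtain ⟨L, hL, hT⟩ := hreg
  set T : ℝ → ℝ := fun x => μ.real {ω | x < |X (0, 0) ω|}
  replace hT : ∀ x, 0 < x → T x = x ^ (-α) * L x := hT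
  obtain ⟨x₁, hx₁⟩ := eventually_atTop.1 (hL.eventually_le_two_rpow_mul (sub_pos.2 hγα))
  set x₀ := max x₁ 1
  have hx₀ : 0 < x₀ := lt_max_of_lt_right one_pos
  have hanti : AntitoneOn T (Set.Ici x₀) := fun x _ y _ hxy =>
    measureReal_mono fun ω hω => lt_of_le_of_lt hxy hω
  have hdbl : ∀ x ≥ x₀, T (2 * x) ≤ 2 ^ (-γ) * T x := by
    intro x hx
    have hx0 : 0 < x := hx₀.trans_le hx
    calc T (2 * x) = 2 ^ (-α) * x ^ (-α) * L (2 * x) := by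
          rw [hT _ (by positivity), Real.mul_rpow zero_le_two hx0.le]
      _ ≤ 2 ^ (-α) * x ^ (-α) * (2 ^ (α - γ) * L x) := by
          gcongr
          exact hx₁ x (le_of_max_le_left hx)
      _ = 2 ^ (-γ) * T x := by
          rw [hT x hx0, show -γ = -α + (α - γ) by ring, Real.rpow_add two_pos]
          ring
  exact ⟨_, (eventually_ge_atTop x₀).mono fun x hx =>
    hanti.le_mul_rpow_neg_of_doubling hx₀ hγ measureReal_nonneg hdbl hx⟩

theorem IsRegVarying.tendsto_rpow_mul_tail {Ω : Type*} [MeasurableSpace Ω] {μ : Measure Ω}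
    [IsFiniteMeasure μ] {X : ℤ × ℤ → Ω → ℝ} {α β s : ℝ} (hreg : IsRegVarying μ X α)
    (hβ : 0 < β) (hs : 0 ≤ s) (hsα : s < α * β) :
    Tendsto (fun n : ℕ => (n : ℝ) ^ s * μ.real {ω | (n : ℝ) ^ β < |X (0, 0) ω|}) atTop (𝓝 0) := by
  set γ := (s / β + α) / 2
  have hsβ : s / β < α := (div_lt_iff₀ hβ).2 (by linarith)
  have hsγ : s < β * γ := by
    have := (div_lt_iff₀ hβ).1 (show s / β < γ by simp only [γ]; linarith)
    linarith
  obtain ⟨C, hC⟩ := hreg.exists_eventually_tail_le (γ := γ)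
    (by simp only [γ]; linarith [div_nonneg hs hβ.le]) (by simp only [γ]; linarith)
  have hpow : Tendsto (fun n : ℕ => (n : ℝ) ^ β) atTop atTop :=
    (tendsto_rpow_atTop hβ).comp tendsto_natCast_atTop_atTop
  have hdecay : Tendsto (fun n : ℕ => C * (n : ℝ) ^ (s - β * γ)) atTop (𝓝 0) := by
    simpa using ((tendsto_rpow_neg_atTop (y := β * γ - s) (by linarith)).comp
      tendsto_natCast_atTop_atTop).const_mul C
  refine squeeze_zero' (Eventually.of_forall fun n => by positivity) ?_ hdecay
  filter_upwards [hpow.eventually hC, eventually_gt_atTop 0] with n hn hn0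
  have hn0' : (0 : ℝ) < n := Nat.cast_pos.2 hn0
  calc (n : ℝ) ^ s * μ.real {ω | (n : ℝ) ^ β < |X (0, 0) ω|}
      ≤ (n : ℝ) ^ s * (C * ((n : ℝ) ^ β) ^ (-γ)) := by gcongr
    _ = C * (n : ℝ) ^ (s - β * γ) := by
      rw [← Real.rpow_mul hn0'.le, sub_eq_add_neg, Real.rpow_add hn0', mul_neg]
      ring

section Field

variable {Ω : Type*} [MeasurableSpace Ω] {μ : Measure Ω} {X : ℤ × ℤ → Ω → ℝ}

theorem IsStationaryField.identDistrib (hX : ∀ p, Measurable (X p)) (hstat : IsStationaryField μ X)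
    (p : ℤ × ℤ) : IdentDistrib (X p) (X (0, 0)) μ μ where
  aemeasurable_fst := (hX p).aemeasurable
  aemeasurable_snd := (hX (0, 0)).aemeasurable
  map_eq := by
    have hfield : ∀ a b : ℤ, Measurable fun ω (q : ℤ × ℤ) => X (q.1 + a, q.2 + b) ω :=
      fun a b => measurable_pi_lambda _ fun q => hX _
    have h := congrArg (Measure.map fun f : ℤ × ℤ → ℝ => f (0, 0)) (hstat p.1 p.2)
    rw [Measure.map_map (measurable_pi_apply _) (hfield _ _),
      Measure.map_map (measurable_pi_apply _) (by simpa using hfield 0 0)] at h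
    simpa [Function.comp_def] using h

theorem IsMDependent.indepFun {m : ℕ} (hdep : IsMDependent μ X m) {p q : ℤ × ℤ}
    (hpq : (m : ℤ) < max |p.1 - q.1| |p.2 - q.2|) : IndepFun (X p) (X q) μ :=
  (hdep {p} {q} (by simpa using hpq)).comp
    (measurable_pi_apply (⟨p, rfl⟩ : ({p} : Set (ℤ × ℤ))) : Measurable fun f : _ → ℝ => f _)
    (measurable_pi_apply (⟨q, rfl⟩ : ({q} : Set (ℤ × ℤ))) : Measurable fun f : _ → ℝ => f _)

theorem IsStationaryField.measureReal_tail_eq (hX : ∀ p, Measurable (X p))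
    (hstat : IsStationaryField μ X) (p : ℤ × ℤ) (t : ℝ) :
    μ.real {ω | t < |X p ω|} = μ.real {ω | t < |X (0, 0) ω|} := by
  simp only [measureReal_def]
  exact congrArg ENNReal.toReal <| (hstat.identDistrib hX p).measure_mem_eq
    (measurableSet_lt measurable_const measurable_id.abs : MeasurableSet {y : ℝ | t < |y|})

theorem IsStationaryField.measureReal_tail_symX_eq (hX : ∀ p, Measurable (X p))
    (hstat : IsStationaryField μ X) (i j : ℤ) (t : ℝ) :
    μ.real {ω | t < |symX X i j ω|} = μ.real {ω | t < |X (0, 0) ω|} := by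
  unfold symX
  split_ifs <;> exact hstat.measureReal_tail_eq hX _ t

theorem IsMDependent.measureReal_tail_inter_tail {m : ℕ} (hX : ∀ p, Measurable (X p))
    (hstat : IsStationaryField μ X) (hdep : IsMDependent μ X m) {p q : ℤ × ℤ}
    (hpq : (m : ℤ) < max |p.1 - q.1| |p.2 - q.2|) (t : ℝ) :
    μ.real ({ω | t < |X p ω|} ∩ {ω | t < |X q ω|}) = μ.real {ω | t < |X (0, 0) ω|} ^ 2 := by
  have hs : MeasurableSet {y : ℝ | t < |y|} := measurableSet_lt measurable_const measurable_id.abs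
  have hindep : μ ({ω | t < |X p ω|} ∩ {ω | t < |X q ω|}) =
      μ {ω | t < |X p ω|} * μ {ω | t < |X q ω|} :=
    (hdep.indepFun hpq).measure_inter_preimage_eq_mul _ _ hs hs
  rw [measureReal_def, hindep, ENNReal.toReal_mul, ← measureReal_def, ← measureReal_def,
    hstat.measureReal_tail_eq hX p, hstat.measureReal_tail_eq hX q, sq]

end Field

def IsScatteredOn (E : ℕ → ℕ → Prop) (I J : Finset ℕ) (m : ℕ) : Prop :=
  (∃ i ∈ I, ∃ j ∈ J, E i j) ∧
    ¬ ∃ i₀ j₀ : ℕ, ∀ i ∈ I, ∀ j ∈ J, E i j → (i₀ ≤ i ∧ i ≤ i₀ + 2 * m ∧ j₀ ≤ j ∧ j ≤ j₀ + 2 * m)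

theorem IsScatteredOn.exists_far_pair {E : ℕ → ℕ → Prop} {I J : Finset ℕ} {m : ℕ}
    (h : IsScatteredOn E I J m) :
    ∃ p ∈ I ×ˢ J, ∃ q ∈ I ×ˢ J, E p.1 p.2 ∧ E q.1 q.2 ∧
      (2 * m : ℤ) < max |(p.1 : ℤ) - q.1| |(p.2 : ℤ) - q.2| := by
  classical
  by_contra! hclose
  obtain ⟨⟨i, hi, j, hj, hE⟩, hsq⟩ := h
  set S := (I ×ˢ J).filter fun p => E p.1 p.2
  have hS : S.Nonempty := ⟨(i, j), by simp [S, hi, hj, hE]⟩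
  obtain ⟨p₀, hp₀, hmin₁⟩ := S.exists_min_image Prod.fst hS
  obtain ⟨q₀, hq₀, hmin₂⟩ := S.exists_min_image Prod.snd hS
  refine hsq ⟨p₀.1, q₀.2, fun i hi j hj hE => ?_⟩
  have hmem : (i, j) ∈ S := by simp [S, hi, hj, hE]
  simp only [S, Finset.mem_filter] at hp₀ hq₀
  have h₁ := hclose _ hp₀.1 (i, j) (Finset.mem_product.2 ⟨hi, hj⟩) hp₀.2 hE
  have h₂ := hclose _ hq₀.1 (i, j) (Finset.mem_product.2 ⟨hi, hj⟩) hq₀.2 hE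
  have h₃ := hmin₁ _ hmem
  have h₄ := hmin₂ _ hmem
  simp only [max_le_iff, abs_le] at h₁ h₂ h₃ h₄
  omega

theorem symX_of_le {Ω : Type*} (X : ℤ × ℤ → Ω → ℝ) {i j : ℤ} (h : i ≤ j) (ω : Ω) :
    symX X i j ω = X (i, j) ω :=
  if_pos h

section Blocks

open Finset

variable {Ω : Type*} [MeasurableSpace Ω] {μ : Measure Ω} [IsFiniteMeasure μ]
  {X : ℤ × ℤ → Ω → ℝ}

theorem measureReal_exists_tail_symX_le (hX : ∀ p, Measurable (X p))
    (hstat : IsStationaryField μ X) (I J : Finset ℕ) (t : ℝ) :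
    μ.real {ω | ∃ i ∈ I, ∃ j ∈ J, t < |symX X i j ω|} ≤
      #I * #J * μ.real {ω | t < |X (0, 0) ω|} :=
  calc μ.real {ω | ∃ i ∈ I, ∃ j ∈ J, t < |symX X i j ω|}
      ≤ μ.real (⋃ p ∈ I ×ˢ J, {ω | t < |symX X p.1 p.2 ω|}) :=
        measureReal_mono (fun ω ⟨i, hi, j, hj, h⟩ =>
          Set.mem_biUnion (x := (i, j)) (mem_product.2 ⟨hi, hj⟩) h) (measure_ne_top _ _)
    _ ≤ ∑ p ∈ I ×ˢ J, μ.real {ω | t < |symX X p.1 p.2 ω|} := measureReal_biUnion_finset_le _ _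
    _ = #I * #J * μ.real {ω | t < |X (0, 0) ω|} := by
        simp [hstat.measureReal_tail_symX_eq hX]

theorem IsMDependent.measureReal_isScatteredOn_le {m : ℕ} (hX : ∀ p, Measurable (X p))
    (hstat : IsStationaryField μ X) (hdep : IsMDependent μ X m) {I J : Finset ℕ}
    (hIJ : ∀ i ∈ I, ∀ j ∈ J, i ≤ j) (t : ℝ) :
    μ.real {ω | IsScatteredOn (fun i j => t < |symX X i j ω|) I J m} ≤
      (#I * #J) ^ 2 * μ.real {ω | t < |X (0, 0) ω|} ^ 2 := by
  set F := ((I ×ˢ J) ×ˢ (I ×ˢ J)).filter fun x : (ℕ × ℕ) × (ℕ × ℕ) =>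
    (2 * m : ℤ) < max |(x.1.1 : ℤ) - x.2.1| |(x.1.2 : ℤ) - x.2.2|
  set A : ℕ × ℕ → Set Ω := fun p => {ω | t < |X (p.1, p.2) ω|}
  have hsub : {ω | IsScatteredOn (fun i j => t < |symX X i j ω|) I J m} ⊆
      ⋃ x ∈ F, A x.1 ∩ A x.2 := by
    intro ω hω
    obtain ⟨p, hp, q, hq, hEp, hEq, hfar⟩ := hω.exists_far_pair
    have hdiag : ∀ p ∈ I ×ˢ J, symX X p.1 p.2 ω = X (p.1, p.2) ω := fun p hp =>
      symX_of_le X (by exact_mod_cast hIJ _ (mem_product.1 hp).1 _ (mem_product.1 hp).2) ω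
    refine Set.mem_biUnion (x := (p, q)) (mem_filter.2 ⟨mem_product.2 ⟨hp, hq⟩, hfar⟩) ?_
    exact ⟨by simpa [A, hdiag p hp] using hEp, by simpa [A, hdiag q hq] using hEq⟩
  calc μ.real {ω | IsScatteredOn (fun i j => t < |symX X i j ω|) I J m}
      ≤ ∑ x ∈ F, μ.real (A x.1 ∩ A x.2) :=
        (measureReal_mono hsub (measure_ne_top _ _)).trans (measureReal_biUnion_finset_le _ _)
    _ = ∑ _x ∈ F, μ.real {ω | t < |X (0, 0) ω|} ^ 2 := by
        refine sum_congr rfl fun x hx => hdep.measureReal_tail_inter_tail hX hstat ?_ t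
        exact lt_of_le_of_lt (by omega) (mem_filter.1 hx).2
    _ ≤ (#I * #J) ^ 2 * μ.real {ω | t < |X (0, 0) ω|} ^ 2 := by
        rw [sum_const, nsmul_eq_mul]
        gcongr
        calc (#F : ℝ) ≤ #((I ×ˢ J) ×ˢ (I ×ˢ J)) := by exact_mod_cast card_filter_le _ _
          _ = (#I * #J) ^ 2 := by simp [card_product, sq]

theorem IsMDependent.measureReal_exists_isScatteredOn_block_le {m : ℕ}
    (hX : ∀ p, Measurable (X p)) (hstat : IsStationaryField μ X) (hdep : IsMDependent μ X m)
    (k r : ℕ) (t : ℝ) :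
    μ.real {ω | ∃ l ∈ Icc 1 k, IsScatteredOn (fun i j => t < |symX X i j ω|)
        (Icc 1 r) (Ioc ((l - 1) * r) (l * r)) m} ≤
      r ^ 2 * μ.real {ω | t < |X (0, 0) ω|} +
        k * (r ^ 2 * μ.real {ω | t < |X (0, 0) ω|}) ^ 2 := by
  set T := μ.real {ω | t < |X (0, 0) ω|}
  set E : ℕ → Set Ω := fun l => {ω | IsScatteredOn (fun i j => t < |symX X i j ω|)
    (Icc 1 r) (Ioc ((l - 1) * r) (l * r)) m}
  have hcard : ∀ l, 1 ≤ l → #(Ioc ((l - 1) * r) (l * r)) = r := fun l hl => by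
    rw [Nat.card_Ioc, Nat.sub_one_mul, Nat.sub_sub_self (Nat.le_mul_of_pos_left r hl)]
  have hblock : ∀ l ∈ Icc 1 k, μ.real (E l) ≤ (if l = 1 then r ^ 2 * T else 0) +
      (r ^ 2 * T) ^ 2 := by
    intro l hl
    obtain ⟨hl₁, -⟩ := mem_Icc.1 hl
    rcases eq_or_lt_of_le hl₁ with rfl | hl₂
    · calc μ.real (E 1) ≤ μ.real {ω | ∃ i ∈ Icc 1 r, ∃ j ∈ Ioc 0 r,
            t < |symX X i j ω|} := measureReal_mono fun ω hω => by simpa using hω.1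
        _ ≤ r ^ 2 * T := by
            simpa [sq] using measureReal_exists_tail_symX_le hX hstat (Icc 1 r) (Ioc 0 r) t
        _ ≤ _ := by simpa using sq_nonneg (r ^ 2 * T)
    · have habove : ∀ i ∈ Icc 1 r, ∀ j ∈ Ioc ((l - 1) * r) (l * r), i ≤ j := by
        intro i hi j hj
        have := Nat.le_mul_of_pos_left r (Nat.sub_pos_of_lt hl₂)
        simp only [mem_Icc, mem_Ioc] at hi hj
        omega
      calc μ.real (E l) ≤ (r * r) ^ 2 * T ^ 2 := by
            simpa [hcard l hl₁] using hdep.measureReal_isScatteredOn_le hX hstat habove t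
        _ = _ := by rw [if_neg hl₂.ne']; ring
  calc μ.real {ω | ∃ l ∈ Icc 1 k, ω ∈ E l}
      ≤ ∑ l ∈ Icc 1 k, ((if l = 1 then r ^ 2 * T else 0) + (r ^ 2 * T) ^ 2) :=
        (measureReal_mono (s₂ := ⋃ l ∈ Icc 1 k, E l)
          (by rintro ω ⟨l, hl, h⟩; exact Set.mem_biUnion hl h) (measure_ne_top _ _)).trans
          <| (measureReal_biUnion_finset_le _ _).trans (sum_le_sum hblock)
    _ ≤ r ^ 2 * T + k * (r ^ 2 * T) ^ 2 := by
        rw [sum_add_distrib, sum_ite_eq', sum_const, Nat.card_Icc,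
          nsmul_eq_mul, Nat.add_sub_cancel]
        gcongr
        split_ifs
        exacts [le_rfl, mul_nonneg (by positivity) measureReal_nonneg]

end Blocks

theorem div_lt_abs_div_iff {b : ℝ} (hb : 0 < b) (t x : ℝ) : t / b < |x / b| ↔ t < |x| := by
  rw [abs_div, abs_of_pos hb, div_lt_div_iff_of_pos_right hb]

theorem kseq_mul_rseq_sq_le (η : ℝ) {n : ℕ} (hn : 0 < n) :
    (kseq η n : ℝ) * rseq η n ^ 2 ≤ (n : ℝ) ^ (2 - η) := by
  have hn' : (0 : ℝ) < n := Nat.cast_pos.2 hn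
  calc (kseq η n : ℝ) * rseq η n ^ 2 ≤ (n : ℝ) ^ η * ((n : ℝ) ^ (1 - η)) ^ 2 := by
        gcongr <;> exact Nat.floor_le (by positivity)
    _ = (n : ℝ) ^ (2 - η) := by
        rw [← Real.rpow_natCast, ← Real.rpow_mul hn'.le, ← Real.rpow_add hn']
        ring_nf

theorem stmt11_general {Ω : Type*} [MeasurableSpace Ω] (μ : Measure Ω) [IsProbabilityMeasure μ]
    (X : ℤ × ℤ → Ω → ℝ) (hmeas : ∀ p, Measurable (X p))
    (m : ℕ) (hstat : IsStationaryField μ X) (hdep : IsMDependent μ X m)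
    (α : ℝ) (hα1 : 2 ≤ α) (hreg : IsRegVarying μ X α)
    (a : ℕ → ℝ) (ha : IsNormSeq μ X a)
    (β η : ℝ)
    (hβ1 : 4 / (3 * α) < β)
    (hη1 : 5 / 6 < η) (hη2 : η < 1) :
    Tendsto
      (fun n : ℕ => (kseq η n : ℝ) *
        (μ {ω | ∃ l ∈ Finset.Icc 1 (kseq η n),
            (∃ i ∈ Finset.Icc 1 (rseq η n), ∃ j ∈ Finset.Ioc ((l - 1) * rseq η n) (l * rseq η n),
              (n : ℝ) ^ β / a (n ^ 2) < |symX X (i : ℤ) (j : ℤ) ω / a (n ^ 2)|) ∧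
            ¬ ∃ i₀ j₀ : ℕ, ∀ i ∈ Finset.Icc 1 (rseq η n),
                ∀ j ∈ Finset.Ioc ((l - 1) * rseq η n) (l * rseq η n),
                  (n : ℝ) ^ β / a (n ^ 2) < |symX X (i : ℤ) (j : ℤ) ω / a (n ^ 2)| →
                    (i₀ ≤ i ∧ i ≤ i₀ + 2 * m ∧ j₀ ≤ j ∧ j ≤ j₀ + 2 * m)}).toReal)
      (atTop ⊓ Filter.principal (goodSet η)) (nhds 0) := by
  have hα : 0 < α := by linarith
  have hβ : 0 < β := lt_of_le_of_lt (by positivity) hβ1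
  have hηαβ : 2 - η < α * β := by
    have := (div_lt_iff₀ (by positivity)).1 hβ1
    linarith
  set u : ℕ → ℝ := fun n => (n : ℝ) ^ (2 - η) * μ.real {ω | (n : ℝ) ^ β < |X (0, 0) ω|}
  have hu : Tendsto u atTop (𝓝 0) := hreg.tendsto_rpow_mul_tail hβ (by linarith) hηαβ
  have ha_pos : ∀ᶠ n : ℕ in atTop, 0 < a (n ^ 2) :=
    (ha.1.comp (tendsto_pow_atTop two_ne_zero)).eventually_gt_atTop 0
  refine (squeeze_zero' (Eventually.of_forall fun n => by positivity) ?_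
    (by simpa using hu.add (hu.pow 2))).mono_left inf_le_left
  filter_upwards [ha_pos, eventually_gt_atTop 0] with n hav hn
  simp_rw [div_lt_abs_div_iff hav]
  set T := μ.real {ω | (n : ℝ) ^ β < |X (0, 0) ω|}
  have hT : 0 ≤ T := measureReal_nonneg
  have hkrT : (kseq η n * rseq η n ^ 2 : ℝ) * T ≤ u n :=
    mul_le_mul_of_nonneg_right (kseq_mul_rseq_sq_le η hn) hT
  calc (kseq η n : ℝ) * μ.real _
      ≤ kseq η n * (rseq η n ^ 2 * T + kseq η n * (rseq η n ^ 2 * T) ^ 2) := by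
        gcongr
        exact hdep.measureReal_exists_isScatteredOn_block_le hmeas hstat _ _ _
    _ = (kseq η n * rseq η n ^ 2) * T + ((kseq η n * rseq η n ^ 2) * T) ^ 2 := by ring
    _ ≤ u n + u n ^ 2 :=
        add_le_add hkrT (pow_le_pow_left₀ (mul_nonneg (by positivity) hT) hkrT 2)

/-- Lemma 4.12 of the paper: the probability that some block in the first
block-row of `Â_n^{>ε_n}` has nonzero entries not all fitting inside a
`(2m+1) × (2m+1)` square is `o(1/k_n)`. -/
theorem stmt11 {Ω : Type*} [MeasurableSpace Ω] (μ : Measure Ω) [IsProbabilityMeasure μ]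
    (X : ℤ × ℤ → Ω → ℝ) (hmeas : ∀ p, Measurable (X p))
    (m : ℕ) (hstat : IsStationaryField μ X) (hdep : IsMDependent μ X m)
    (α : ℝ) (hα1 : 2 ≤ α) (hα2 : α < 4) (hreg : IsRegVarying μ X α)
    (a : ℕ → ℝ) (ha : IsNormSeq μ X a)
    (β η : ℝ)
    (hβ1 : 4 / (3 * α) < β) (hβ2 : β < 2 * (8 - α) / (α * (10 - α)))
    (hη1 : 5 / 6 < η) (hη2 : η < 1) :
    Tendsto
      (fun n : ℕ => (kseq η n : ℝ) *
        (μ {ω | ∃ l ∈ Finset.Icc 1 (kseq η n),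
            (∃ i ∈ Finset.Icc 1 (rseq η n), ∃ j ∈ Finset.Ioc ((l - 1) * rseq η n) (l * rseq η n),
              (n : ℝ) ^ β / a (n ^ 2) < |symX X (i : ℤ) (j : ℤ) ω / a (n ^ 2)|) ∧
            ¬ ∃ i₀ j₀ : ℕ, ∀ i ∈ Finset.Icc 1 (rseq η n),
                ∀ j ∈ Finset.Ioc ((l - 1) * rseq η n) (l * rseq η n),
                  (n : ℝ) ^ β / a (n ^ 2) < |symX X (i : ℤ) (j : ℤ) ω / a (n ^ 2)| →
                    (i₀ ≤ i ∧ i ≤ i₀ + 2 * m ∧ j₀ ≤ j ∧ j ≤ j₀ + 2 * m)}).toReal)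
      (atTop ⊓ Filter.principal (goodSet η)) (nhds 0) :=
  stmt11_general μ X hmeas m hstat hdep α hα1 hreg a ha β η hβ1 hη1 hη2
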